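/- arXiv:0810.2608 — 3 statements merged into one kernel-verified Lean document; each statement's English description precedes it below -/
import Mathlib

section
/- The number of black-rooted bicolored binary trees with i black nodes and j white nodes equals (1/(2j+1)) * C(2j+1, i) * C(2i, j). -/
/-- The number of nodes at even (`true`) or odd (`false`) depth of a plane binary tree.
In a bicolored binary tree rooted at a black node, the black nodes are exactly those at
even depth and the white nodes those at odd depth. -/
def nodesAtParity : Bool → Tree Unit → ℕ
  | _, BinaryTree.nil => 0
  | b, BinaryTree.node _ l r => (if b then 1 else 0) + nodesAtParity (!b) l + nodesAtParity (!b) r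

open Finset Polynomial

namespace BicoloredAux

noncomputable def N (i j : ℕ) : ℕ :=
  Nat.card {t : Tree Unit // nodesAtParity true t = i ∧ nodesAtParity false t = j}

/-- all trees with at most `n` nodes -/
def allTrees : ℕ → Finset (Tree Unit)
  | 0 => {Tree.nil}
  | n+1 => insert Tree.nil
      (((allTrees n) ×ˢ (allTrees n)).image fun p => Tree.node () p.1 p.2)

lemma mem_allTrees : ∀ (n : ℕ) (t : Tree Unit), t.numNodes ≤ n → t ∈ allTrees n := by
  intro n
  induction n with
  | zero =>
    intro t h
    cases t with
    | nil => simp [allTrees]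
    | node a l r => simp [Tree.numNodes] at h
  | succ n ih =>
    intro t h
    cases t with
    | nil => simp [allTrees]
    | node a l r =>
      simp only [Tree.numNodes, BinaryTree.numNodes] at h
      have hl : l ∈ allTrees n := ih l (by simp only [Tree.numNodes]; omega)
      have hr : r ∈ allTrees n := ih r (by simp only [Tree.numNodes]; omega)
      simp only [allTrees, mem_insert, mem_image, mem_product]
      right
      exact ⟨(l, r), ⟨hl, hr⟩, rfl⟩

lemma nap_add (t : Tree Unit) (b : Bool) :
    nodesAtParity b t + nodesAtParity (!b) t = t.numNodes := by
  induction t generalizing b with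
  | nil => simp [nodesAtParity]
  | node a l r ihl ihr =>
    have hl := ihl (!b); have hr := ihr (!b)
    simp only [nodesAtParity, Tree.numNodes, Bool.not_not] at *
    cases b <;> simp at * <;> omega

lemma finite_aux (f g : Tree Unit → ℕ)
    (hf : ∀ t, f t + g t = t.numNodes) (p q : ℕ) :
    Finite {t : Tree Unit // f t = p ∧ g t = q} := by
  have : {t : Tree Unit | f t = p ∧ g t = q} ⊆ ↑(allTrees (p + q)) := by
    intro t ht
    obtain ⟨h1, h2⟩ := ht
    exact mem_allTrees _ _ (by rw [← hf t, h1, h2])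
  exact ((allTrees (p+q)).finite_toSet.subset this).to_subtype

instance finite_tf (p q : ℕ) :
    Finite {t : Tree Unit // nodesAtParity true t = p ∧ nodesAtParity false t = q} :=
  finite_aux _ _ (fun t => nap_add t true) p q

instance finite_ft (p q : ℕ) :
    Finite {t : Tree Unit // nodesAtParity false t = p ∧ nodesAtParity true t = q} :=
  finite_aux _ _ (fun t => nap_add t false) p q

lemma nap_bounds : ∀ t : Tree Unit,
    nodesAtParity false t ≤ 2 * nodesAtParity true t ∧
    nodesAtParity true t ≤ 2 * nodesAtParity false t + 1 := by
  intro t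
  induction t with
  | nil => simp [nodesAtParity]
  | node a l r ihl ihr =>
    simp [nodesAtParity] at *
    omega

lemma N_zero (j : ℕ) : N 0 j = if j = 0 then 1 else 0 := by
  rcases Nat.eq_zero_or_pos j with hj | hj
  · subst hj
    simp only [if_true]
    rw [N]
    have key : ∀ t : Tree Unit,
        (nodesAtParity true t = 0 ∧ nodesAtParity false t = 0) ↔ t = Tree.nil := by
      intro t
      cases t with
      | nil => simp [nodesAtParity]
      | node a l r => simp [nodesAtParity]
    haveI : Unique {t : Tree Unit // nodesAtParity true t = 0 ∧ nodesAtParity false t = 0} := by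
      refine ⟨⟨⟨Tree.nil, by simp [nodesAtParity]⟩⟩, ?_⟩
      rintro ⟨t, ht⟩
      exact Subtype.ext ((key t).mp ht)
    exact Nat.card_unique
  · rw [if_neg (by omega), N]
    haveI : IsEmpty {t : Tree Unit // nodesAtParity true t = 0 ∧ nodesAtParity false t = j} := by
      refine ⟨?_⟩
      rintro ⟨t, h1, h2⟩
      have := (nap_bounds t).1
      omega
    exact Nat.card_of_isEmpty

lemma N_eq_zero_of_lt {i j : ℕ} (h : 2 * i < j) : N i j = 0 := by
  rw [N]
  haveI : IsEmpty {t : Tree Unit // nodesAtParity true t = i ∧ nodesAtParity false t = j} := by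
    refine ⟨?_⟩
    rintro ⟨t, h1, h2⟩
    have := (nap_bounds t).1
    omega
  exact Nat.card_of_isEmpty

lemma N_eq_zero_of_lt' {i j : ℕ} (h : 2 * j + 1 < i) : N i j = 0 := by
  rw [N]
  haveI : IsEmpty {t : Tree Unit // nodesAtParity true t = i ∧ nodesAtParity false t = j} := by
    refine ⟨?_⟩
    rintro ⟨t, h1, h2⟩
    have := (nap_bounds t).2
    omega
  exact Nat.card_of_isEmpty

lemma nat_card_sigma {ι : Type*} [Fintype ι] (f : ι → Type*) [∀ i, Finite (f i)] :
    Nat.card (Σ i, f i) = ∑ i, Nat.card (f i) := by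
  letI := fun i => Fintype.ofFinite (f i)
  simp [Nat.card_eq_fintype_card]

lemma card_pair_conv {α β : Type*} (u u' : α → ℕ) (v v' : β → ℕ)
    (hf : ∀ p a, Finite {x : α // u x = p ∧ u' x = a})
    (hg : ∀ p a, Finite {x : β // v x = p ∧ v' x = a}) (n m : ℕ) :
    Nat.card {x : α × β // u x.1 + v x.2 = n ∧ u' x.1 + v' x.2 = m}
      = ∑ p ∈ antidiagonal n, ∑ q ∈ antidiagonal m,
          Nat.card {a : α // u a = p.1 ∧ u' a = q.1} *
            Nat.card {b : β // v b = p.2 ∧ v' b = q.2} := by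
  classical
  have E : {x : α × β // u x.1 + v x.2 = n ∧ u' x.1 + v' x.2 = m} ≃
      Σ k : ↥(antidiagonal n ×ˢ antidiagonal m),
        ({a : α // u a = (k : (ℕ × ℕ) × ℕ × ℕ).1.1 ∧ u' a = (k : (ℕ × ℕ) × ℕ × ℕ).2.1} ×
         {b : β // v b = (k : (ℕ × ℕ) × ℕ × ℕ).1.2 ∧ v' b = (k : (ℕ × ℕ) × ℕ × ℕ).2.2}) := by
    refine ⟨fun x => ⟨⟨((u x.1.1, v x.1.2), (u' x.1.1, v' x.1.2)), ?_⟩,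
        ⟨⟨x.1.1, rfl, rfl⟩, ⟨x.1.2, rfl, rfl⟩⟩⟩, fun s => ⟨(s.2.1.1, s.2.2.1), ?_⟩, ?_, ?_⟩
    · simp only [mem_product, Finset.HasAntidiagonal.mem_antidiagonal]
      exact ⟨x.2.1, x.2.2⟩
    · have hk := s.1.2
      simp only [mem_product, Finset.HasAntidiagonal.mem_antidiagonal] at hk
      obtain ⟨ha1, ha2⟩ := s.2.1.2
      obtain ⟨hb1, hb2⟩ := s.2.2.2
      constructor
      · rw [ha1, hb1]; exact hk.1
      · rw [ha2, hb2]; exact hk.2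
    · rintro ⟨⟨a, b⟩, h⟩; rfl
    · rintro ⟨⟨⟨⟨p1, p2⟩, q1, q2⟩, hk⟩, ⟨⟨a, ha1, ha2⟩, ⟨b, hb1, hb2⟩⟩⟩
      dsimp only at ha1 ha2 hb1 hb2
      subst ha1; subst ha2; subst hb1; subst hb2
      rfl
  rw [Nat.card_congr E]
  haveI : ∀ k : ↥(antidiagonal n ×ˢ antidiagonal m),
      Finite ({a : α // u a = (k : (ℕ × ℕ) × ℕ × ℕ).1.1 ∧ u' a = (k : (ℕ × ℕ) × ℕ × ℕ).2.1} ×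
        {b : β // v b = (k : (ℕ × ℕ) × ℕ × ℕ).1.2 ∧ v' b = (k : (ℕ × ℕ) × ℕ × ℕ).2.2}) := by
    intro k
    haveI := hf (k : (ℕ × ℕ) × ℕ × ℕ).1.1 (k : (ℕ × ℕ) × ℕ × ℕ).2.1
    haveI := hg (k : (ℕ × ℕ) × ℕ × ℕ).1.2 (k : (ℕ × ℕ) × ℕ × ℕ).2.2
    infer_instance
  rw [nat_card_sigma]
  simp only [Nat.card_prod]
  rw [Finset.sum_coe_sort (antidiagonal n ×ˢ antidiagonal m)
    (fun k : (ℕ × ℕ) × ℕ × ℕ => Nat.card {a : α // u a = k.1.1 ∧ u' a = k.2.1} *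
      Nat.card {b : β // v b = k.1.2 ∧ v' b = k.2.2}), Finset.sum_product]

lemma N_succ (i j : ℕ) :
    N (i+1) j = ∑ p ∈ antidiagonal i, ∑ q ∈ antidiagonal j, N q.1 p.1 * N q.2 p.2 := by
  have hb : Function.Bijective
      (fun x : {x : Tree Unit × Tree Unit //
          nodesAtParity false x.1 + nodesAtParity false x.2 = i ∧
          nodesAtParity true x.1 + nodesAtParity true x.2 = j} =>
        (⟨Tree.node () x.1.1 x.1.2, by
          obtain ⟨⟨l, r⟩, h1, h2⟩ := x
          simp only [nodesAtParity] at h1 h2 ⊢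
          simp at h1 h2 ⊢
          omega⟩ :
          {t : Tree Unit // nodesAtParity true t = i + 1 ∧ nodesAtParity false t = j})) := by
    constructor
    · rintro ⟨⟨a, b⟩, h⟩ ⟨⟨c, d⟩, h'⟩ he
      simp only [Subtype.mk.injEq, BinaryTree.node.injEq, true_and] at he
      exact Subtype.ext (Prod.ext he.1 he.2)
    · rintro ⟨t, h1, h2⟩
      cases t with
      | nil => exfalso; simp [nodesAtParity] at h1
      | node a l r =>
        simp only [nodesAtParity] at h1 h2
        simp at h1 h2
        refine ⟨⟨(l, r), by simp; omega, by simp [nodesAtParity]; omega⟩, ?_⟩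
        simp
  have := Nat.card_congr (Equiv.ofBijective _ hb)
  rw [N, ← this]
  rw [card_pair_conv (fun t => nodesAtParity false t) (fun t => nodesAtParity true t)
    (fun t => nodesAtParity false t) (fun t => nodesAtParity true t)
    (fun p q => finite_ft p q) (fun p q => finite_ft p q) i j]
  refine Finset.sum_congr rfl fun p _ => Finset.sum_congr rfl fun q _ => ?_
  rw [N, N]
  congr 1 <;> exact Nat.card_congr (Equiv.subtypeEquivRight (by tauto))

noncomputable def Bpoly (i : ℕ) : Polynomial ℚ :=
  ∑ j ∈ range (2*i+1), Polynomial.C (N i j : ℚ) * Polynomial.X ^ j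

noncomputable def Wpoly (i : ℕ) : Polynomial ℚ :=
  ∑ j ∈ range (2*i+2), Polynomial.C (N j i : ℚ) * Polynomial.X ^ j

lemma coeff_Bpoly (i j : ℕ) : (Bpoly i).coeff j = (N i j : ℚ) := by
  rw [Bpoly, finset_sum_coeff]
  simp only [coeff_C_mul, coeff_X_pow, mul_ite, mul_one, mul_zero]
  rw [Finset.sum_ite_eq (range (2*i+1)) j (fun j' => (N i j' : ℚ))]
  split_ifs with h
  · rfl
  · rw [N_eq_zero_of_lt (by simp at h; omega), Nat.cast_zero]

lemma coeff_Wpoly (i j : ℕ) : (Wpoly i).coeff j = (N j i : ℚ) := by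
  rw [Wpoly, finset_sum_coeff]
  simp only [coeff_C_mul, coeff_X_pow, mul_ite, mul_one, mul_zero]
  rw [Finset.sum_ite_eq (range (2*i+2)) j (fun j' => (N j' i : ℚ))]
  split_ifs with h
  · rfl
  · rw [N_eq_zero_of_lt' (by simp at h; omega), Nat.cast_zero]

noncomputable def Bser : PowerSeries (Polynomial ℚ) := PowerSeries.mk Bpoly
noncomputable def Wser : PowerSeries (Polynomial ℚ) := PowerSeries.mk Wpoly

lemma BW : Bser = 1 + PowerSeries.X * Wser ^ 2 := by
  apply PowerSeries.ext
  intro n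
  rw [map_add]
  cases n with
  | zero =>
    rw [sq, PowerSeries.coeff_zero_eq_constantCoeff, map_mul, PowerSeries.constantCoeff_X,
      zero_mul, map_one, add_zero]
    rw [← PowerSeries.coeff_zero_eq_constantCoeff]
    rw [Bser, PowerSeries.coeff_mk]
    apply Polynomial.ext
    intro j
    rw [coeff_Bpoly, N_zero, Polynomial.coeff_one]
    split_ifs with h h2 h2 <;> simp_all
  | succ n =>
    rw [Bser, PowerSeries.coeff_mk, PowerSeries.coeff_one, if_neg (Nat.succ_ne_zero n),
      zero_add, PowerSeries.coeff_succ_X_mul, sq, PowerSeries.coeff_mul]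
    apply Polynomial.ext
    intro j
    rw [coeff_Bpoly, N_succ, Polynomial.finset_sum_coeff]
    push_cast
    refine Finset.sum_congr rfl fun p _ => ?_
    rw [Wser, PowerSeries.coeff_mk, PowerSeries.coeff_mk, Polynomial.coeff_mul]
    push_cast
    refine Finset.sum_congr rfl fun q _ => ?_
    rw [coeff_Wpoly, coeff_Wpoly]

lemma WB : Wser = 1 + PowerSeries.C Polynomial.X * Bser ^ 2 := by
  apply PowerSeries.ext
  intro n
  rw [map_add, PowerSeries.coeff_C_mul, PowerSeries.coeff_one, sq, PowerSeries.coeff_mul,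
    Wser, PowerSeries.coeff_mk]
  apply Polynomial.ext
  intro j
  rw [Polynomial.coeff_add, coeff_Wpoly]
  cases j with
  | zero =>
    have hs : (X * ∑ p ∈ antidiagonal n, (PowerSeries.coeff p.1) Bser *
        (PowerSeries.coeff p.2) Bser).coeff 0 = 0 := by
      rw [Polynomial.mul_coeff_zero, Polynomial.coeff_X_zero, zero_mul]
    rw [hs, add_zero, N_zero]
    split_ifs with h <;> simp [h]
  | succ j =>
    rw [Polynomial.coeff_X_mul]
    have h1 : ((if n = 0 then (1:ℚ[X]) else 0)).coeff (j+1) = 0 := by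
      split_ifs <;> simp [Polynomial.coeff_one]
    rw [h1, zero_add, N_succ, Finset.sum_comm, Polynomial.finset_sum_coeff]
    push_cast
    refine Finset.sum_congr rfl fun p _ => ?_
    rw [Bser, PowerSeries.coeff_mk, PowerSeries.coeff_mk, Polynomial.coeff_mul]
    push_cast
    refine Finset.sum_congr rfl fun q _ => ?_
    rw [coeff_Bpoly, coeff_Bpoly]

noncomputable def φp : Polynomial (Polynomial ℚ) :=
  (1 + Polynomial.C Polynomial.X * (1 + Polynomial.X) ^ 2) ^ 2

noncomputable def βc (n k : ℕ) : Polynomial ℚ :=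
  if n = 0 then (if k = 0 then 1 else 0)
  else if k ≤ n then ((k : ℚ) / (n : ℚ)) • (φp ^ n).coeff (n - k) else 0

lemma nat_mul_eq_smul (m : ℕ) (a : Polynomial ℚ) :
    ((m : ℕ) : Polynomial ℚ) * a = (m : ℚ) • a := by
  rw [Algebra.smul_def, map_natCast]

lemma key {n k : ℕ} (hk : 1 ≤ k) (hkn : k ≤ n) :
    ∑ m ∈ range ((φp ^ k).natDegree + 1), (φp ^ k).coeff m * βc (n - k) m
      = ((k : ℚ) / (n : ℚ)) • (φp ^ n).coeff (n - k) := by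
  rcases eq_or_lt_of_le hkn with rfl | hlt
  · -- n = k
    rw [Nat.sub_self]
    rw [Finset.sum_eq_single_of_mem 0 (Finset.mem_range.mpr (by omega))]
    · rw [βc, if_pos rfl, if_pos rfl, mul_one,
        div_self (Nat.cast_ne_zero.mpr (by omega) : (k:ℚ) ≠ 0), one_smul]
    · intro m _ hm
      rw [βc, if_pos rfl, if_neg hm, mul_zero]
  · -- k < n
    set d := n - k with hdd
    have hd1 : 1 ≤ d := by omega
    have hd0 : d ≠ 0 := by omega
    -- reduce both index sets to range (d+1)
    have e1 : ∑ m ∈ range ((φp ^ k).natDegree + 1), (φp ^ k).coeff m * βc d m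
        = ∑ m ∈ range (max ((φp ^ k).natDegree + 1) (d + 1)), (φp ^ k).coeff m * βc d m := by
      apply Finset.sum_subset (Finset.range_subset_range.mpr (le_max_left _ _))
      intro x _ hx
      rw [Finset.mem_range, not_lt] at hx
      rw [Polynomial.coeff_eq_zero_of_natDegree_lt (by omega), zero_mul]
    have e2 : ∑ m ∈ range (d + 1), (φp ^ k).coeff m * βc d m
        = ∑ m ∈ range (max ((φp ^ k).natDegree + 1) (d + 1)), (φp ^ k).coeff m * βc d m := by
      apply Finset.sum_subset (Finset.range_subset_range.mpr (le_max_right _ _))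
      intro x _ hx
      rw [Finset.mem_range, not_lt] at hx
      rw [βc, if_neg hd0, if_neg (by omega), mul_zero]
    rw [e1, ← e2, Finset.sum_range_succ']
    have hT0 : (φp ^ k).coeff 0 * βc d 0 = 0 := by
      rw [βc, if_neg hd0, if_pos (Nat.zero_le d), Nat.cast_zero, zero_div, zero_smul, mul_zero]
    rw [hT0, add_zero]
    have e3 : ∀ e ∈ range d, (φp ^ k).coeff (e+1) * βc d (e+1)
        = ((1:ℚ)/(d:ℚ)) • ((φp ^ k).coeff (e+1) * (((e+1 : ℕ)) : Polynomial ℚ)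
            * (φp ^ d).coeff (d-1-e)) := by
      intro e he
      rw [βc, if_neg hd0, if_pos (by simp at he; omega)]
      have : d - (e+1) = d - 1 - e := by omega
      rw [this]
      have hre : (φp ^ k).coeff (e+1) * (((e+1 : ℕ)) : Polynomial ℚ) * (φp ^ d).coeff (d-1-e)
          = ((e+1 : ℕ) : Polynomial ℚ) * ((φp ^ k).coeff (e+1) * (φp ^ d).coeff (d-1-e)) := by
        ring
      rw [hre, nat_mul_eq_smul, mul_smul_comm, smul_smul]
      congr 1
      push_cast
      field_simp
    rw [Finset.sum_congr rfl e3, ← Finset.smul_sum]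
    -- derivative side
    have hder : (derivative (φp ^ k) * φp ^ d).coeff (d-1)
        = ∑ e ∈ range d, (φp ^ k).coeff (e+1) * (((e+1 : ℕ)) : Polynomial ℚ)
            * (φp ^ d).coeff (d-1-e) := by
      rw [Polynomial.coeff_mul,
        Finset.Nat.sum_antidiagonal_eq_sum_range_succ
          (fun a b => (derivative (φp ^ k)).coeff a * (φp ^ d).coeff b) (d-1)]
      simp only [Nat.succ_eq_add_one, Nat.sub_add_cancel hd1]
      refine Finset.sum_congr rfl fun e _ => ?_
      rw [Polynomial.coeff_derivative]
      push_cast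
      ring
    rw [← hder]
    -- the polynomial identity
    have hId : ((n : ℕ) : Polynomial (Polynomial ℚ)) * (derivative (φp ^ k) * φp ^ d)
        = ((k : ℕ) : Polynomial (Polynomial ℚ)) * derivative (φp ^ n) := by
      rw [Polynomial.derivative_pow φp k, Polynomial.derivative_pow φp n]
      have hpow : φp ^ (k-1) * φp ^ d = φp ^ (n-1) := by
        rw [← pow_add]; congr 1; omega
      calc ((n : ℕ) : Polynomial (Polynomial ℚ)) *
            (Polynomial.C ((k : ℕ) : Polynomial ℚ) * φp ^ (k-1) * derivative φp * φp ^ d)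
          = Polynomial.C ((k : ℕ) : Polynomial ℚ) * ((n : ℕ) : Polynomial (Polynomial ℚ))
              * (φp ^ (k-1) * φp ^ d) * derivative φp := by ring
        _ = Polynomial.C ((k : ℕ) : Polynomial ℚ) * ((n : ℕ) : Polynomial (Polynomial ℚ))
              * φp ^ (n-1) * derivative φp := by rw [hpow]
        _ = ((k : ℕ) : Polynomial (Polynomial ℚ)) *
              (Polynomial.C ((n : ℕ) : Polynomial ℚ) * φp ^ (n-1) * derivative φp) := by
            rw [Polynomial.C_eq_natCast, Polynomial.C_eq_natCast]; ring
    -- take coefficient d-1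
    have hco := congrArg (fun p : Polynomial (Polynomial ℚ) => p.coeff (d-1)) hId
    simp only [← Polynomial.C_eq_natCast, Polynomial.coeff_C_mul] at hco
    rw [Polynomial.coeff_derivative] at hco
    have hcast : ((d-1 : ℕ) : Polynomial ℚ) + 1 = ((d : ℕ) : Polynomial ℚ) := by
      rw [Nat.cast_sub hd1]; push_cast; ring
    rw [hcast, Nat.sub_add_cancel hd1] at hco
    set v := (derivative (φp ^ k) * φp ^ d).coeff (d-1) with hv
    set w := (φp ^ n).coeff d with hw
    have hvw : (n : ℚ) • v = ((k : ℚ) * (d : ℚ)) • w := by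
      rw [mul_smul, ← nat_mul_eq_smul, ← nat_mul_eq_smul, ← nat_mul_eq_smul]
      simp only [← Polynomial.C_eq_natCast]
      rw [hco]
      simp only [Polynomial.C_eq_natCast]
      ring
    have hn0 : (n : ℚ) ≠ 0 := Nat.cast_ne_zero.mpr (by omega)
    have hdq0 : (d : ℚ) ≠ 0 := Nat.cast_ne_zero.mpr hd0
    have h2 := congrArg (fun z : Polynomial ℚ => (1/((n:ℚ)*(d:ℚ))) • z) hvw
    simp only [smul_smul] at h2
    calc ((1:ℚ)/(d:ℚ)) • v = (1/((n:ℚ)*(d:ℚ)) * (n:ℚ)) • v := by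
          congr 1; field_simp
      _ = (1/((n:ℚ)*(d:ℚ)) * ((k:ℚ)*(d:ℚ))) • w := h2
      _ = ((k:ℚ)/(n:ℚ)) • w := by congr 1; field_simp

noncomputable def Fser : PowerSeries (Polynomial ℚ) := Bser - 1

lemma constantCoeff_Fser : PowerSeries.constantCoeff Fser = 0 := by
  rw [Fser, map_sub, map_one, ← PowerSeries.coeff_zero_eq_constantCoeff, Bser,
    PowerSeries.coeff_mk]
  have : Bpoly 0 = 1 := by
    apply Polynomial.ext
    intro j
    rw [coeff_Bpoly, N_zero, Polynomial.coeff_one]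
    split_ifs <;> simp_all
  rw [this, sub_self]

lemma Feq : Fser = PowerSeries.X * Polynomial.eval₂ (PowerSeries.C) Fser φp := by
  have h1 : Polynomial.eval₂ (PowerSeries.C) Fser φp
      = (1 + PowerSeries.C Polynomial.X * (1 + Fser) ^ 2) ^ 2 := by
    rw [φp]
    rw [Polynomial.eval₂_pow, Polynomial.eval₂_add, Polynomial.eval₂_one, Polynomial.eval₂_mul,
      Polynomial.eval₂_C, Polynomial.eval₂_pow, Polynomial.eval₂_add, Polynomial.eval₂_one,
      Polynomial.eval₂_X]
  have h2 : (1 : PowerSeries (Polynomial ℚ)) + Fser = Bser := by rw [Fser]; ring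
  have h3 : 1 + PowerSeries.C Polynomial.X * Bser ^ 2 = Wser := WB.symm
  rw [h1, h2, h3, Fser, BW]
  ring

theorem coeff_F_pow (n : ℕ) : ∀ k, PowerSeries.coeff n (Fser ^ k) = βc n k := by
  induction n using Nat.strong_induction_on with
  | _ n ih =>
    intro k
    rcases Nat.eq_zero_or_pos n with rfl | hn
    · rw [PowerSeries.coeff_zero_eq_constantCoeff, map_pow, constantCoeff_Fser, βc, if_pos rfl]
      rcases Nat.eq_zero_or_pos k with rfl | hk
      · simp
      · rw [zero_pow (by omega), if_neg (by omega)]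
    rcases Nat.eq_zero_or_pos k with rfl | hk
    · rw [pow_zero, PowerSeries.coeff_one, if_neg (by omega), βc, if_neg (by omega),
        if_pos (Nat.zero_le n), Nat.cast_zero, zero_div, zero_smul]
    by_cases hkn : k ≤ n
    · have hFk : Fser ^ k = PowerSeries.X ^ k *
          Polynomial.eval₂ (PowerSeries.C) Fser (φp ^ k) := by
        conv_lhs => rw [Feq]
        rw [mul_pow, Polynomial.eval₂_pow]
      rw [hFk, PowerSeries.coeff_X_pow_mul', if_pos hkn]
      rw [Polynomial.eval₂_eq_sum_range, map_sum]
      have hterm : ∀ m ∈ range ((φp^k).natDegree + 1),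
          PowerSeries.coeff (n-k) (PowerSeries.C ((φp^k).coeff m) * Fser ^ m)
            = (φp^k).coeff m * βc (n-k) m := by
        intro m _
        rw [PowerSeries.coeff_C_mul, ih (n-k) (by omega) m]
      rw [Finset.sum_congr rfl hterm, key hk hkn, βc, if_neg (by omega), if_pos hkn]
    · have hXdvd : (PowerSeries.X : PowerSeries (Polynomial ℚ))^k ∣ Fser^k :=
        pow_dvd_pow_of_dvd (PowerSeries.X_dvd_iff.mpr constantCoeff_Fser) k
      rw [PowerSeries.X_pow_dvd_iff] at hXdvd
      rw [hXdvd n (by omega), βc, if_neg (by omega), if_neg hkn]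

lemma Bpoly_eq (i : ℕ) (hi : 1 ≤ i) :
    Bpoly i = ((1:ℚ)/(i:ℚ)) • (φp ^ i).coeff (i-1) := by
  have h1 : PowerSeries.coeff i Fser = Bpoly i := by
    rw [Fser, map_sub, PowerSeries.coeff_one, if_neg (by omega), sub_zero, Bser,
      PowerSeries.coeff_mk]
  have h2 := coeff_F_pow i 1
  rw [pow_one, h1, βc, if_neg (by omega), if_pos hi] at h2
  rw [h2]
  norm_num

lemma phi_pow_coeff (i : ℕ) : (φp ^ i).coeff (i-1)
    = ∑ k ∈ range (2*i+1),
        Polynomial.C (((Nat.choose (2*i) k * Nat.choose (2*k) (i-1) : ℕ)) : ℚ)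
          * Polynomial.X ^ k := by
  have h1 : φp ^ i
      = (Polynomial.C (Polynomial.X : Polynomial ℚ) * (1+Polynomial.X)^2 + 1) ^ (2*i) := by
    rw [φp, ← pow_mul]
    ring
  rw [h1, add_pow, Polynomial.finset_sum_coeff]
  refine Finset.sum_congr rfl fun k hk => ?_
  rw [one_pow, mul_one, mul_pow, ← Polynomial.C_pow, ← pow_mul, ← Polynomial.C_eq_natCast]
  have h2 : Polynomial.C ((Polynomial.X:Polynomial ℚ)^k) * (1+Polynomial.X)^(2*k)
        * Polynomial.C ((Nat.choose (2*i) k : Polynomial ℚ))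
      = Polynomial.C ((Polynomial.X:Polynomial ℚ)^k * (Nat.choose (2*i) k : Polynomial ℚ))
        * (1+Polynomial.X)^(2*k) := by
    rw [Polynomial.C_mul]; ring
  rw [h2, Polynomial.coeff_C_mul, Polynomial.coeff_one_add_X_pow]
  simp only [Nat.cast_mul, Polynomial.C_mul, Polynomial.C_eq_natCast]
  ring

lemma N_formula (i j : ℕ) (hi : 1 ≤ i) :
    (N i j : ℚ) = (1/(i:ℚ)) * (Nat.choose (2*i) j) * (Nat.choose (2*j) (i-1)) := by
  have h := congrArg (fun p : Polynomial ℚ => p.coeff j) (Bpoly_eq i hi)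
  rw [coeff_Bpoly] at h
  rw [h, Polynomial.coeff_smul, phi_pow_coeff, Polynomial.finset_sum_coeff]
  simp only [Polynomial.coeff_C_mul, Polynomial.coeff_X_pow, mul_ite, mul_one, mul_zero]
  rw [Finset.sum_ite_eq (range (2*i+1)) j _]
  split_ifs with hmem
  · push_cast
    rw [smul_eq_mul]
    ring
  · rw [Finset.mem_range, not_lt] at hmem
    rw [Nat.choose_eq_zero_of_lt (by omega), smul_zero]
    push_cast
    ring

end BicoloredAux

/-- The number of black-rooted bicolored binary trees with `i` black nodes and
`j` white nodes equals `(1/(2j+1)) * C(2j+1, i) * C(2i, j)`. -/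
theorem black_rooted_bicolored_binary_trees_count (i j : ℕ) (hi : 1 ≤ i) :
    (Nat.card {t : Tree Unit //
        nodesAtParity true t = i ∧ nodesAtParity false t = j} : ℚ)
      = 1 / (2 * j + 1) * Nat.choose (2 * j + 1) i * Nat.choose (2 * i) j := by
  show ((BicoloredAux.N i j : ℕ) : ℚ) = _
  rw [BicoloredAux.N_formula i j hi]
  have keyq : ((2*j+1 : ℕ):ℚ) * (Nat.choose (2*j) (i-1))
      = (Nat.choose (2*j+1) i) * (i : ℚ) := by
    have h' : (2*j+1) * (2*j).choose (i-1) = (2*j+1).choose i * i := by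
      have h'' := Nat.add_one_mul_choose_eq (2*j) (i-1)
      rw [Nat.sub_add_cancel hi] at h''
      exact h''
    exact_mod_cast h'
  have h2j : ((2:ℚ) * j + 1) ≠ 0 := by positivity
  have hi0 : ((i:ℕ):ℚ) ≠ 0 := Nat.cast_ne_zero.mpr (by omega)
  field_simp
  push_cast at keyq ⊢
  linear_combination (Nat.choose (2*i) j : ℚ) * keyq
end

section
/- For white-rooted and black-rooted bicolored binary trees, |B°_{ij}| = ((2j-i+1)/(2i-j+1)) * |B•_{ij}|. -/
namespace BicoloredAux

/-- Plug a context list (path from the root to a `nil` position, recording at each step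
the sibling subtree) into a tree. -/
def plug : List (Bool × Tree Unit) → Tree Unit
  | [] => BinaryTree.nil
  | (true, s) :: c => BinaryTree.node () (plug c) s
  | (false, s) :: c => BinaryTree.node () s (plug c)

@[simp] lemma nodesAtParity_nil (b : Bool) : nodesAtParity b BinaryTree.nil = 0 := rfl

lemma nodesAtParity_node (b : Bool) (l r : Tree Unit) :
    nodesAtParity b (BinaryTree.node () l r)
      = (if b then 1 else 0) + nodesAtParity (!b) l + nodesAtParity (!b) r := rfl

lemma nodesAtParity_plug_cons (b d : Bool) (s : Tree Unit) (c : List (Bool × Tree Unit)) :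
    nodesAtParity b (plug ((d, s) :: c))
      = (if b then 1 else 0) + nodesAtParity (!b) s + nodesAtParity (!b) (plug c) := by
  cases d <;> simp [plug, nodesAtParity_node] <;> omega

lemma plug_append (l m : List (Bool × Tree Unit)) (b : Bool) :
    nodesAtParity b (plug (l ++ m)) =
      nodesAtParity b (plug l)
        + nodesAtParity (if l.length % 2 = 0 then b else !b) (plug m) := by
  induction l generalizing b with
  | nil => simp [plug]
  | cons hd tl ih =>
    obtain ⟨d, s⟩ := hd
    rw [List.cons_append, nodesAtParity_plug_cons, nodesAtParity_plug_cons, ih (!b)]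
    rcases Nat.mod_two_eq_zero_or_one tl.length with h | h
    · have h2 : (tl.length + 1) % 2 = 1 := by omega
      simp [h, h2]
      omega
    · have h2 : (tl.length + 1) % 2 = 0 := by omega
      simp [h, h2, Bool.not_not]
      omega

lemma plug_reverse (l : List (Bool × Tree Unit)) (b : Bool) :
    nodesAtParity b (plug l.reverse)
      = nodesAtParity (if (l.length + 1) % 2 = 0 then b else !b) (plug l) := by
  induction l generalizing b with
  | nil => simp [plug]
  | cons hd tl ih =>
    obtain ⟨d, s⟩ := hd
    rw [List.reverse_cons, plug_append, ih b]
    rcases Nat.mod_two_eq_zero_or_one tl.length with h | h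
    · have h1 : (tl.length + 1) % 2 = 1 := by omega
      have h2 : (tl.length + 1 + 1) % 2 = 0 := by omega
      rw [nodesAtParity_plug_cons]
      simp [plug, List.length_reverse, h, h1, h2, nodesAtParity_plug_cons]
      omega
    · have h1 : (tl.length + 1) % 2 = 0 := by omega
      have h2 : (tl.length + 1 + 1) % 2 = 1 := by omega
      rw [nodesAtParity_plug_cons]
      simp [plug, List.length_reverse, h, h1, h2, nodesAtParity_plug_cons, Bool.not_not]
      omega

lemma plug_reverse_even (l : List (Bool × Tree Unit)) (hl : l.length % 2 = 0) (b : Bool) :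
    nodesAtParity b (plug l.reverse) = nodesAtParity (!b) (plug l) := by
  rw [plug_reverse]
  have : ¬ (l.length + 1) % 2 = 0 := by omega
  rw [if_neg this]

lemma nodesAtParity_add (t : Tree Unit) :
    ∀ b, nodesAtParity b t + nodesAtParity (!b) t = t.numNodes := by
  induction t with
  | nil => simp [BinaryTree.numNodes]
  | node v a c iha ihc =>
    intro b
    have ha := iha (!b); have hc := ihc (!b)
    rw [Bool.not_not] at ha hc
    obtain rfl : v = () := rfl
    rw [nodesAtParity_node, nodesAtParity_node, Tree.numNodes, BinaryTree.numNodes]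
    cases b <;> simp [Tree.numNodes] at * <;> omega

/-- Number of `nil` positions at even (`true`) / odd (`false`) depth. -/
def fibCount : Bool → Tree Unit → ℕ
  | b, BinaryTree.nil => if b then 1 else 0
  | b, BinaryTree.node _ a c => fibCount (!b) a + fibCount (!b) c

lemma fibCount_spec (t : Tree Unit) :
    ∀ b, fibCount b t + nodesAtParity b t
      = 2 * nodesAtParity (!b) t + (if b then 1 else 0) := by
  induction t with
  | nil => intro b; simp [fibCount]
  | node v a c iha ihc =>
    intro b
    have ha := iha (!b); have hc := ihc (!b)
    rw [Bool.not_not] at ha hc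
    obtain rfl : v = () := rfl
    rw [nodesAtParity_node, nodesAtParity_node, fibCount]
    cases b <;> simp at * <;> omega

/-- All context lists plugging to a given tree. -/
def fibs : Tree Unit → Finset (List (Bool × Tree Unit))
  | BinaryTree.nil => {[]}
  | BinaryTree.node _ a b =>
      ((fibs a).image (fun c => (true, b) :: c)) ∪ ((fibs b).image (fun c => (false, a) :: c))

lemma mem_fibs {t : Tree Unit} {l : List (Bool × Tree Unit)} :
    l ∈ fibs t ↔ plug l = t := by
  induction t generalizing l with
  | nil =>
    simp only [fibs, Finset.mem_singleton]
    constructor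
    · rintro rfl; rfl
    · intro h
      match l with
      | [] => rfl
      | (true, s) :: c => simp [plug] at h
      | (false, s) :: c => simp [plug] at h
  | node v a b iha ihb =>
    obtain rfl : v = () := rfl
    simp only [fibs, Finset.mem_union, Finset.mem_image]
    constructor
    · rintro (⟨c, hc, rfl⟩ | ⟨c, hc, rfl⟩)
      · rw [plug, iha.mp hc]
      · rw [plug, ihb.mp hc]
    · intro h
      match l with
      | [] => simp only [plug] at h; exact absurd h (by simp)
      | (true, s) :: c =>
        rw [plug, BinaryTree.node.injEq] at h
        exact Or.inl ⟨c, iha.mpr h.2.1, by rw [h.2.2]⟩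
      | (false, s) :: c =>
        rw [plug, BinaryTree.node.injEq] at h
        exact Or.inr ⟨c, ihb.mpr h.2.2, by rw [h.2.1]⟩

lemma card_fibs_filter (t : Tree Unit) :
    ∀ b, ((fibs t).filter (fun l => l.length % 2 = if b then 0 else 1)).card
      = fibCount b t := by
  induction t with
  | nil =>
    intro b
    cases b <;> simp [fibs, fibCount, Finset.filter_singleton]
  | node v a c iha ihc =>
    intro b
    obtain rfl : v = () := rfl
    have hconv : ∀ (s : Finset (List (Bool × Tree Unit))) (p : Bool × Tree Unit),
        (s.filter (fun l => (p :: l).length % 2 = if b then 0 else 1))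
          = s.filter (fun l => l.length % 2 = if !b then 0 else 1) := by
      intro s p
      apply Finset.filter_congr
      intro l _
      cases b <;> simp <;> omega
    rw [fibs, Finset.filter_union, Finset.card_union_of_disjoint, Finset.filter_image,
      Finset.filter_image,
      Finset.card_image_of_injective _ (fun x y h => by simpa using h),
      Finset.card_image_of_injective _ (fun x y h => by simpa using h),
      hconv, hconv, iha (!b), ihc (!b), fibCount]
    · apply Finset.disjoint_filter_filter
      rw [Finset.disjoint_left]
      intro l hl hr
      simp only [Finset.mem_image] at hl hr
      obtain ⟨x, -, rfl⟩ := hl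
      obtain ⟨y, -, h⟩ := hr
      simp at h

lemma finite_numNodes_le (n : ℕ) : {t : Tree Unit | t.numNodes ≤ n}.Finite := by
  induction n with
  | zero =>
    apply Set.Finite.subset (Set.finite_singleton BinaryTree.nil)
    intro t ht
    cases t with
    | nil => simp
    | node v a b => simp [BinaryTree.numNodes] at ht
  | succ n ih =>
    apply Set.Finite.subset
      (Set.Finite.insert BinaryTree.nil
        ((ih.prod ih).image (fun p : Tree Unit × Tree Unit => BinaryTree.node () p.1 p.2)))
    intro t ht
    cases t with
    | nil => simp
    | node v a b =>
      obtain rfl : v = () := rfl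
      simp only [Set.mem_setOf_eq, BinaryTree.numNodes] at ht
      refine Set.mem_insert_of_mem _ ⟨(a, b), ⟨?_, ?_⟩, rfl⟩
      · simp only [Set.mem_setOf_eq, Tree.numNodes]; omega
      · simp only [Set.mem_setOf_eq, Tree.numNodes]; omega

/-- The finset of trees with `j` even-depth and `i` odd-depth nodes. -/
noncomputable def TS (j i : ℕ) : Finset (Tree Unit) :=
  (finite_numNodes_le (j + i)).toFinset.filter
    (fun t => nodesAtParity true t = j ∧ nodesAtParity false t = i)

lemma mem_TS {j i : ℕ} {t : Tree Unit} :
    t ∈ TS j i ↔ nodesAtParity true t = j ∧ nodesAtParity false t = i := by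
  rw [TS, Finset.mem_filter, Set.Finite.mem_toFinset, Set.mem_setOf_eq]
  constructor
  · exact fun h => h.2
  · intro h
    refine ⟨?_, h⟩
    have := nodesAtParity_add t true
    simp only [Bool.not_true] at this
    omega

lemma natCard_eq_TS (j i : ℕ) :
    Nat.card {t : Tree Unit //
        nodesAtParity true t = j ∧ nodesAtParity false t = i} = (TS j i).card := by
  have h1 : {t : Tree Unit | nodesAtParity true t = j ∧ nodesAtParity false t = i}
      = ↑(TS j i) := by
    ext t; simp [mem_TS]
  calc Nat.card {t : Tree Unit //
        nodesAtParity true t = j ∧ nodesAtParity false t = i}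
      = ({t : Tree Unit | nodesAtParity true t = j ∧ nodesAtParity false t = i} : Set _).ncard :=
        Nat.card_coe_set_eq _
    _ = (↑(TS j i) : Set (Tree Unit)).ncard := by rw [h1]
    _ = (TS j i).card := Set.ncard_coe_finset _

/-- The finset of even-length context lists whose plugging has `j` even-depth and `i`
odd-depth nodes. -/
noncomputable def LS (j i : ℕ) : Finset (List (Bool × Tree Unit)) :=
  (TS j i).biUnion (fun t => (fibs t).filter (fun l => l.length % 2 = 0))

lemma mem_LS {j i : ℕ} {l : List (Bool × Tree Unit)} :
    l ∈ LS j i ↔ l.length % 2 = 0 ∧ nodesAtParity true (plug l) = j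
      ∧ nodesAtParity false (plug l) = i := by
  simp only [LS, Finset.mem_biUnion, Finset.mem_filter, mem_fibs, mem_TS]
  constructor
  · rintro ⟨t, ht, rfl, h⟩
    exact ⟨h, ht⟩
  · rintro ⟨h, h1, h2⟩
    exact ⟨plug l, ⟨h1, h2⟩, rfl, h⟩

lemma card_LS (j i : ℕ) : (LS j i).card = ∑ t ∈ TS j i, fibCount true t := by
  rw [LS, Finset.card_biUnion]
  · exact Finset.sum_congr rfl fun t _ => by
      have := card_fibs_filter t true
      simpa using this
  · intro x hx y hy hxy
    apply Finset.disjoint_filter_filter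
    rw [Finset.disjoint_left]
    intro l hl hr
    rw [mem_fibs] at hl hr
    exact hxy (hl ▸ hr)

lemma rev_mem_LS {j i : ℕ} {l : List (Bool × Tree Unit)} (hl : l ∈ LS j i) :
    l.reverse ∈ LS i j := by
  rw [mem_LS] at hl ⊢
  refine ⟨by simpa using hl.1, ?_, ?_⟩
  · rw [plug_reverse_even l hl.1 true]; exact hl.2.2
  · rw [plug_reverse_even l hl.1 false]; exact hl.2.1

lemma card_LS_swap (j i : ℕ) : (LS j i).card = (LS i j).card :=
  Finset.card_bij' (fun l _ => l.reverse) (fun l _ => l.reverse)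
    (fun l hl => rev_mem_LS hl) (fun l hl => rev_mem_LS hl)
    (fun l _ => List.reverse_reverse l) (fun l _ => List.reverse_reverse l)

lemma sum_fibCount (j i : ℕ) :
    (∑ t ∈ TS j i, (fibCount true t : ℚ)) = (TS j i).card * (2 * (i : ℚ) - j + 1) := by
  have key : ∀ t ∈ TS j i, (fibCount true t : ℚ) = 2 * (i : ℚ) - j + 1 := by
    intro t ht
    rw [mem_TS] at ht
    have h := fibCount_spec t true
    rw [ht.1, Bool.not_true, ht.2, if_pos rfl] at h
    have h2 : (fibCount true t : ℚ) + j = 2 * i + 1 := by exact_mod_cast h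
    linarith
  rw [Finset.sum_congr rfl key, Finset.sum_const, nsmul_eq_mul]

end BicoloredAux

open BicoloredAux in
/-- For white-rooted and black-rooted bicolored binary trees with `i` black nodes and
`j` white nodes, `|B°_{ij}| = ((2j-i+1)/(2i-j+1)) * |B•_{ij}|`, stated in the
cross-multiplied form `|B°_{ij}| (2i-j+1) = (2j-i+1) |B•_{ij}|`. -/
theorem white_rooted_vs_black_rooted_count (i j : ℕ) :
    (Nat.card {t : Tree Unit //
        nodesAtParity true t = j ∧ nodesAtParity false t = i} : ℚ)
      * (2 * (i : ℚ) - j + 1)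
    = (2 * (j : ℚ) - i + 1)
      * Nat.card {t : Tree Unit //
          nodesAtParity true t = i ∧ nodesAtParity false t = j} := by
  rw [natCard_eq_TS j i, natCard_eq_TS i j]
  have h1 := sum_fibCount j i
  have h2 := sum_fibCount i j
  have h3 : (∑ t ∈ TS j i, (fibCount true t : ℚ)) = ∑ t ∈ TS i j, (fibCount true t : ℚ) := by
    have hn : (∑ t ∈ TS j i, fibCount true t) = ∑ t ∈ TS i j, fibCount true t := by
      rw [← card_LS, ← card_LS, card_LS_swap]
    exact_mod_cast hn
  rw [← h1, h3, h2]; ring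
end

section
/- The generating functions r1, r2 of black-rooted and white-rooted bicolored binary trees satisfy r1 = x•(1+r2)^2 and r2 = x∘(1+r1)^2, as formal power series in two variables. -/
/-- The generating function `r1(x•,x∘) = Σ |B•_{ij}| x•^i x∘^j` of black-rooted
bicolored binary trees, as a formal power series in the two variables indexed by
`Bool` (`true` = x•, `false` = x∘). In a black-rooted tree the black nodes are those
at even depth. -/
noncomputable def r1 : MvPowerSeries Bool ℚ :=
  fun e => (Nat.card {t : Tree Unit // t ≠ Tree.nil ∧
    nodesAtParity true t = e true ∧ nodesAtParity false t = e false} : ℚ)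

/-- The generating function `r2(x•,x∘) = Σ |B°_{ij}| x•^i x∘^j` of white-rooted
bicolored binary trees. In a white-rooted tree the black nodes are those at odd depth. -/
noncomputable def r2 : MvPowerSeries Bool ℚ :=
  fun e => (Nat.card {t : Tree Unit // t ≠ Tree.nil ∧
    nodesAtParity false t = e true ∧ nodesAtParity true t = e false} : ℚ)

open Tree Finsupp

theorem numNodes_eq_nap (b : Bool) (t : Tree Unit) :
    t.numNodes = nodesAtParity b t + nodesAtParity (!b) t := by
  induction t generalizing b with
  | nil => rfl
  | node a l r hl hr =>
    have h1 := hl (!b); have h2 := hr (!b)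
    rw [Bool.not_not] at h1 h2
    cases b <;> simp_all [nodesAtParity, Tree.numNodes] <;> omega

theorem one_le_nap_true {t : Tree Unit} (h : t ≠ Tree.nil) : 1 ≤ nodesAtParity true t := by
  cases t with
  | nil => exact absurd rfl h
  | node a l r => simp [nodesAtParity]; omega

/-- bundled statistic: `stat b t i = nodesAtParity (b == i) t`. -/
noncomputable def stat (b : Bool) (t : Tree Unit) : Bool →₀ ℕ :=
  Finsupp.equivFunOnFinite.symm fun i => nodesAtParity (b == i) t

theorem stat_apply (b : Bool) (t : Tree Unit) (i : Bool) :
    stat b t i = nodesAtParity (b == i) t := rfl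

theorem stat_nil (b : Bool) : stat b Tree.nil = 0 := by
  ext i; simp [stat_apply, nodesAtParity]

theorem stat_node (b : Bool) (a : Unit) (l r : Tree Unit) :
    stat b (Tree.node a l r) = Finsupp.single b 1 + stat (!b) l + stat (!b) r := by
  ext i
  cases b <;> cases i <;>
    simp [stat_apply, nodesAtParity, Finsupp.single_apply] <;> omega

theorem stat_ne_zero {b : Bool} {t : Tree Unit} (h : t ≠ Tree.nil) : stat b t ≠ 0 := by
  intro h0
  have : stat b t b = 0 := by rw [h0]; rfl
  rw [stat_apply, beq_self_eq_true] at this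
  have := one_le_nap_true h
  simp_all

theorem finite_numNodes_le (n : ℕ) : {t : Tree Unit | t.numNodes ≤ n}.Finite := by
  induction n with
  | zero =>
    apply Set.Finite.subset (Set.finite_singleton Tree.nil)
    intro t ht
    cases t with
    | nil => rfl
    | node a l r => simp [Tree.numNodes] at ht
  | succ n ih =>
    apply Set.Finite.subset
      (((ih.prod ih).image fun p : Tree Unit × Tree Unit => Tree.node () p.1 p.2).insert Tree.nil)
    intro t ht
    cases t with
    | nil => exact Set.mem_insert _ _
    | node a l r =>
      refine Set.mem_insert_of_mem _ ⟨(l, r), ⟨?_, ?_⟩, rfl⟩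
      · simp only [Set.mem_setOf_eq] at ht ⊢; simp [BinaryTree.numNodes] at ht; simp only [Tree.numNodes]; omega
      · simp only [Set.mem_setOf_eq] at ht ⊢; simp [BinaryTree.numNodes] at ht; simp only [Tree.numNodes]; omega

theorem finite_stat (b : Bool) (e : Bool →₀ ℕ) : {t : Tree Unit | stat b t = e}.Finite := by
  apply (finite_numNodes_le (e true + e false)).subset
  intro t ht
  simp only [Set.mem_setOf_eq] at ht ⊢
  have h1 : e true = nodesAtParity (b == true) t := by rw [← ht]; rfl
  have h2 : e false = nodesAtParity (b == false) t := by rw [← ht]; rfl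
  have h3 := numNodes_eq_nap b t
  cases b <;> simp_all <;> omega

noncomputable def Rb (b : Bool) : MvPowerSeries Bool ℚ :=
  fun e => (Nat.card {t : Tree Unit // t ≠ Tree.nil ∧ stat b t = e} : ℚ)

noncomputable def Gb (b : Bool) : MvPowerSeries Bool ℚ :=
  fun e => (Nat.card {t : Tree Unit // stat b t = e} : ℚ)

theorem stat_eq_iff (b : Bool) (t : Tree Unit) (e : Bool →₀ ℕ) :
    stat b t = e ↔ nodesAtParity b t = e true ∧ nodesAtParity (!b) t = e false := by
  constructor
  · rintro rfl
    cases b <;> exact ⟨rfl, rfl⟩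
  · rintro ⟨h1, h2⟩
    ext i
    cases b <;> cases i <;> simp_all [stat_apply]

theorem Gb_eq (b : Bool) : Gb b = 1 + Rb b := by
  classical
  ext e
  rw [map_add, MvPowerSeries.coeff_one]
  show (Nat.card {t : Tree Unit // stat b t = e} : ℚ)
    = (if e = 0 then 1 else 0) + (Nat.card {t : Tree Unit // t ≠ Tree.nil ∧ stat b t = e} : ℚ)
  by_cases he : e = 0
  · subst he
    rw [if_pos rfl]
    have h1 : Nat.card {t : Tree Unit // stat b t = 0} = 1 := by
      haveI : Unique {t : Tree Unit // stat b t = 0} :=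
        ⟨⟨⟨Tree.nil, stat_nil b⟩⟩, by
          rintro ⟨t, ht⟩
          refine Subtype.ext ?_
          by_contra hne
          exact stat_ne_zero hne ht⟩
      exact Nat.card_unique
    have h2 : Nat.card {t : Tree Unit // t ≠ Tree.nil ∧ stat b t = 0} = 0 := by
      haveI : IsEmpty {t : Tree Unit // t ≠ Tree.nil ∧ stat b t = 0} :=
        ⟨fun ⟨t, h, h0⟩ => stat_ne_zero h h0⟩
      exact Nat.card_of_isEmpty
    rw [h1, h2]; norm_num
  · rw [if_neg he, zero_add]
    congr 1
    apply Nat.card_congr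
    apply Equiv.subtypeEquivRight
    intro t
    constructor
    · intro h
      refine ⟨?_, h⟩
      rintro rfl
      exact he ((stat_nil b) ▸ h).symm
    · rintro ⟨h1, h2⟩; exact h2

instance finite_stat_subtype (b : Bool) (e : Bool →₀ ℕ) :
    Finite {t : Tree Unit // stat b t = e} :=
  (finite_stat b e).to_subtype

theorem card_pairs (b : Bool) (m : Bool →₀ ℕ) :
    (Nat.card {p : Tree Unit × Tree Unit // stat b p.1 + stat b p.2 = m} : ℚ)
      = ∑ pq ∈ Finset.HasAntidiagonal.antidiagonal m,
          (Nat.card {t : Tree Unit // stat b t = pq.1} : ℚ)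
            * (Nat.card {t : Tree Unit // stat b t = pq.2} : ℚ) := by
  classical
  let E : {p : Tree Unit × Tree Unit // stat b p.1 + stat b p.2 = m} ≃
      Σ pq : Finset.HasAntidiagonal.antidiagonal m,
        {t : Tree Unit // stat b t = pq.1.1} × {t : Tree Unit // stat b t = pq.1.2} :=
    { toFun := fun x =>
        ⟨⟨(stat b x.1.1, stat b x.1.2), Finset.HasAntidiagonal.mem_antidiagonal.2 x.2⟩,
          ⟨x.1.1, rfl⟩, ⟨x.1.2, rfl⟩⟩
      invFun := fun y => ⟨(y.2.1.1, y.2.2.1), by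
        rw [y.2.1.2, y.2.2.2]; exact Finset.HasAntidiagonal.mem_antidiagonal.1 y.1.2⟩
      left_inv := fun x => rfl
      right_inv := by
        rintro ⟨⟨⟨p, q⟩, hpq⟩, ⟨l, hl⟩, ⟨r, hr⟩⟩
        dsimp only at hl hr
        subst hl; subst hr; rfl }
  rw [Nat.card_congr E]
  letI : ∀ e' : Bool →₀ ℕ, Fintype {t : Tree Unit // stat b t = e'} :=
    fun _ => Fintype.ofFinite _
  rw [Nat.card_eq_fintype_card, Fintype.card_sigma]
  push_cast
  rw [← Finset.sum_coe_sort (Finset.HasAntidiagonal.antidiagonal m)]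
  apply Finset.sum_congr rfl
  intro pq _
  rw [Fintype.card_prod]
  push_cast
  rw [Nat.card_eq_fintype_card, Nat.card_eq_fintype_card]

theorem card_node (b : Bool) (e : Bool →₀ ℕ) (he : e b ≠ 0)
    (hsum : Finsupp.single b 1 + (e - Finsupp.single b 1) = e) :
    Nat.card {t : Tree Unit // t ≠ Tree.nil ∧ stat b t = e}
      = Nat.card {p : Tree Unit × Tree Unit //
          stat (!b) p.1 + stat (!b) p.2 = e - Finsupp.single b 1} := by
  symm
  apply Nat.card_congr
  refine Equiv.ofBijective
    (fun x => ⟨Tree.node () x.1.1 x.1.2, by simp, by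
      rw [stat_node, add_assoc, x.2, hsum]⟩) ⟨?_, ?_⟩
  · rintro ⟨⟨l1, r1⟩, h1⟩ ⟨⟨l2, r2⟩, h2⟩ h
    simp only [Subtype.mk.injEq, BinaryTree.node.injEq] at h
    exact Subtype.ext (Prod.ext h.2.1 h.2.2)
  · rintro ⟨t, hne, hst⟩
    cases t with
    | nil => exact absurd rfl hne
    | node a l r =>
      refine ⟨⟨(l, r), ?_⟩, ?_⟩
      · apply add_left_cancel (a := Finsupp.single b 1)
        rw [← add_assoc, ← stat_node b a l r, hst, hsum]
      · exact Subtype.ext rfl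

theorem hsum_single {b : Bool} {e : Bool →₀ ℕ} (he : e b ≠ 0) :
    Finsupp.single b 1 + (e - Finsupp.single b 1) = e := by
  ext i
  rw [Finsupp.add_apply, Finsupp.tsub_apply, Finsupp.single_apply]
  by_cases h : b = i
  · subst h; simp; omega
  · simp [h]

theorem key (b : Bool) : Rb b = MvPowerSeries.X b * (Gb (!b)) ^ 2 := by
  classical
  ext e
  rw [MvPowerSeries.coeff_mul]
  by_cases he : e b = 0
  · rw [Finset.sum_eq_zero]
    · show (Nat.card {t : Tree Unit // t ≠ Tree.nil ∧ stat b t = e} : ℚ) = 0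
      haveI : IsEmpty {t : Tree Unit // t ≠ Tree.nil ∧ stat b t = e} := by
        refine ⟨?_⟩
        rintro ⟨t, hne, hst⟩
        have h1 : stat b t b = e b := by rw [hst]
        rw [stat_apply, beq_self_eq_true] at h1
        have := one_le_nap_true hne
        omega
      rw [Nat.card_of_isEmpty]; norm_num
    · intro p hp
      rw [MvPowerSeries.coeff_X]
      by_cases h : p.1 = Finsupp.single b 1
      · exfalso
        have := Finset.HasAntidiagonal.mem_antidiagonal.1 hp
        have h2 : (p.1 + p.2) b = e b := by rw [this]
        rw [Finsupp.add_apply, h, Finsupp.single_apply, if_pos rfl] at h2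
        omega
      · rw [if_neg h, zero_mul]
  · have hsum := hsum_single he
    rw [Finset.sum_eq_single (Finsupp.single b 1, e - Finsupp.single b 1)]
    · rw [MvPowerSeries.coeff_X, if_pos rfl, one_mul]
      show (Nat.card {t : Tree Unit // t ≠ Tree.nil ∧ stat b t = e} : ℚ) = _
      rw [card_node b e he hsum, card_pairs (!b) (e - Finsupp.single b 1)]
      rw [sq, MvPowerSeries.coeff_mul]
      rfl
    · rintro ⟨p, q⟩ hpq hne
      rw [MvPowerSeries.coeff_X]
      by_cases h : p = Finsupp.single b 1
      · exfalso
        subst h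
        have h1 := Finset.HasAntidiagonal.mem_antidiagonal.1 hpq
        apply hne
        have : q = e - Finsupp.single b 1 := by
          apply add_left_cancel (a := Finsupp.single b 1)
          rw [h1, hsum]
        rw [this]
      · rw [if_neg h, zero_mul]
    · intro h
      exact absurd (Finset.HasAntidiagonal.mem_antidiagonal.2 hsum) h


/-- The generating functions `r1, r2` of black-rooted and white-rooted bicolored
binary trees satisfy `r1 = x•(1+r2)^2` and `r2 = x∘(1+r1)^2`, as formal power
series in two variables. -/
theorem bicolored_binary_trees_gf_system :
    r1 = MvPowerSeries.X true * (1 + r2) ^ 2 ∧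
    r2 = MvPowerSeries.X false * (1 + r1) ^ 2 := by
  have hr1 : r1 = Rb true := by
    funext e
    unfold r1 Rb
    congr 1
    norm_cast
    apply Nat.card_congr
    apply Equiv.subtypeEquivRight
    intro t
    rw [stat_eq_iff]
    simp
  have hr2 : r2 = Rb false := by
    funext e
    unfold r2 Rb
    congr 1
    norm_cast
    apply Nat.card_congr
    apply Equiv.subtypeEquivRight
    intro t
    rw [stat_eq_iff]
    simp
  constructor
  · rw [hr1, hr2, ← Gb_eq false]
    exact key true
  · rw [hr1, hr2, ← Gb_eq true]
    exact key false
end
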